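/- Let U(n,F_q) be the group of lower unitriangular matrices acting on A = F_q[x_1,...,x_n] (each g ∈ U(n,F_q) sends x_i to x_i plus a linear combination of x_1,...,x_{i-1}). Then for every g ∈ U(n,F_q) and every l, the endomorphism ψ_l commutes with the action of g: g ∘ ψ_l = ψ_l ∘ g on A. -/

import Mathlib

open MvPolynomial Finset

/-- The `F`-algebra endomorphism `ψ_l` of `F[x_1,…,x_n]` sending each variable `x_i` to
`F_{l,q}(x_i) = ∏_{u ∈ span(x_1,…,x_l)} (x_i - u)`. -/
noncomputable def psi (F : Type*) [Field F] [Fintype F] (n l : ℕ) (h : l ≤ n) :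
    MvPolynomial (Fin n) F →ₐ[F] MvPolynomial (Fin n) F :=
  MvPolynomial.aeval fun i =>
    ∏ c : Fin l → F, (MvPolynomial.X i - ∑ j, c j • MvPolynomial.X (Fin.castLE h j))

/-!
For a finite `F_q`-subspace `V` of a domain, `y ↦ ∏_{v ∈ V} (y - v)` is `F_q`-linear: the
difference `∏ (X + y - v) - ∏ (X - v)` has degree `< |V|` and is constant on `V`, and
`a ^ |V| = a` for `a ∈ F_q`. On `x_i`, `ψ_l` is this map for `V = span(x_1, …, x_l)`, so `ψ_l`
agrees with it on all linear forms. A lower unitriangular `g` restricts to a bijection of `V`,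
hence `g (∏ (x_i - v)) = ∏ (g x_i - v)`, i.e. `g (ψ_l x_i) = ψ_l (g x_i)`.
-/

/-- For injective `S`, the subspace polynomial of `S(G)` evaluated at `y` (the paper's `F_{l,q}`). -/
def subspacePoly {R G : Type*} [CommRing R] [Fintype G] (S : G → R) (y : R) : R :=
  ∏ c, (y - S c)

section SubspacePoly

variable {R G : Type*} [CommRing R] [AddCommGroup G] [Fintype G]

namespace Polynomial

theorem _root_.subspacePoly_add [IsDomain R] (S : G →+ R) (hS : Function.Injective S)
    (y z : R) : subspacePoly S (y + z) = subspacePoly S y + subspacePoly S z := by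
  classical
  set d : R[X] := ∏ c, (X - C (S c - z)) - ∏ c, (X - C (S c))
  have hN : (0 : WithBot ℕ) < Fintype.card G := by exact_mod_cast Fintype.card_pos
  have hdeg : d.degree < Fintype.card G := by
    have hmonic : (∏ c, (X - C (S c - z))).Monic := monic_prod_X_sub_C _ _
    have hdeg' : (∏ c, (X - C (S c - z))).degree = (Fintype.card G : WithBot ℕ) := by
      rw [degree_eq_natDegree hmonic.ne_zero, natDegree_finsetProd_X_sub_C_eq_card, card_univ]
    rw [← hdeg']
    refine degree_sub_lt_left ?_ hmonic.ne_zero ?_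
    · rw [hdeg', degree_eq_natDegree (monic_prod_X_sub_C _ _).ne_zero,
        natDegree_finsetProd_X_sub_C_eq_card, card_univ]
    · rw [hmonic.leadingCoeff, (monic_prod_X_sub_C _ _).leadingCoeff]
  have heval : ∀ e, d.eval (S e) = ∏ c, (z - S c) := by
    intro e
    have hzero : ∏ c, (S e - S c) = 0 := prod_eq_zero (mem_univ e) (sub_self _)
    simp only [d, eval_sub, eval_prod, eval_X, eval_C, hzero, sub_zero]
    exact Fintype.prod_equiv (Equiv.subRight e) _ _ fun c => by
      rw [Equiv.subRight_apply, map_sub]; ring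
  have hd : d = C (∏ c, (z - S c)) := by
    refine eq_of_degrees_lt_of_eval_finset_eq (s := univ.image S) ?_ ?_ ?_
    · rwa [card_image_of_injective _ hS, card_univ]
    · exact degree_C_le.trans_lt (by rwa [card_image_of_injective _ hS, card_univ])
    · intro x hx
      obtain ⟨e, -, rfl⟩ := mem_image.mp hx
      rw [heval, eval_C]
  have hdy := congrArg (eval y) hd
  simp only [d, eval_sub, eval_prod, eval_X, eval_C, sub_eq_iff_eq_add] at hdy
  rw [subspacePoly, subspacePoly, subspacePoly, add_comm (∏ c, (y - S c)), ← hdy]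
  exact prod_congr rfl fun c _ => by ring

end Polynomial

variable {F : Type*} [Field F] [Fintype F] [Algebra F R] [Module F G]

theorem subspacePoly_smul (S : G →ₗ[F] R) (a : F) (y : R) :
    subspacePoly S (a • y) = a • subspacePoly S y := by
  rcases eq_or_ne a 0 with rfl | ha
  · rw [zero_smul, zero_smul]
    exact prod_eq_zero (mem_univ 0) (by rw [map_zero, sub_self])
  · calc ∏ c, (a • y - S c) = ∏ c, (a • y - S (a • c)) :=
          (Fintype.prod_equiv (MulAction.toPerm (Units.mk0 a ha)) _ _ fun c => rfl).symm
      _ = ∏ c, a • (y - S c) := by simp only [map_smul, smul_sub]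
      _ = a ^ Fintype.card G • ∏ c, (y - S c) := (smul_prod _ _ _).symm
      _ = a • ∏ c, (y - S c) := by
        rw [Module.card_eq_pow_finrank (K := F), FiniteField.pow_card_pow]

@[simps]
noncomputable def subspacePolyLinearMap [IsDomain R] (S : G →ₗ[F] R) (hS : Function.Injective S) :
    R →ₗ[F] R where
  toFun := subspacePoly S
  map_add' := subspacePoly_add S.toAddMonoidHom hS
  map_smul' := subspacePoly_smul S

end SubspacePoly

theorem map_subspacePoly {R R' G Φ : Type*} [CommRing R] [CommRing R'] [Fintype G]
    [FunLike Φ R R'] [RingHomClass Φ R R'] (σ : Φ) (S : G → R) (S' : G → R') (T : G → G)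
    (hT : Function.Bijective T) (hσ : ∀ c, σ (S c) = S' (T c)) (y : R) :
    σ (subspacePoly S y) = subspacePoly S' (σ y) := by
  simp only [subspacePoly, map_prod, map_sub, hσ]
  exact Fintype.prod_bijective T hT _ _ fun c => rfl

section LowerTriangular

variable {n l : ℕ}

theorem Matrix.IsLowerTriangular.sum_castLE {R M : Type*} [Semiring R] [AddCommMonoid M]
    [Module R M] {g : Matrix (Fin n) (Fin n) R} (hg : g.IsLowerTriangular) (h : l ≤ n)
    (i : Fin l) (v : Fin n → M) :
    ∑ k, g (Fin.castLE h i) k • v k =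
      ∑ k : Fin l, g (Fin.castLE h i) (Fin.castLE h k) • v (Fin.castLE h k) := by
  refine (sum_of_injOn (Fin.castLE h) (Fin.castLE_injective h).injOn (fun _ _ => mem_univ _)
    (fun k _ hk => ?_) fun _ _ => rfl).symm
  have hik : Fin.castLE h i < k := by
    by_contra! hki
    exact hk ⟨⟨k, (Fin.le_iff_val_le_val.mp hki).trans_lt i.isLt⟩, mem_coe.mpr (mem_univ _), rfl⟩
  rw [show g (Fin.castLE h i) k = 0 from hg hik, zero_smul]

theorem Matrix.IsLowerTriangular.submatrix_castLE {R : Type*} [Zero R]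
    {g : Matrix (Fin n) (Fin n) R} (hg : g.IsLowerTriangular) (h : l ≤ n) :
    (g.submatrix (Fin.castLE h) (Fin.castLE h)).IsLowerTriangular :=
  fun _ _ hij => hg (by simpa using hij)

theorem Matrix.IsLowerTriangular.isUnit_of_diag_eq_one {m R : Type*} [Fintype m]
    [LinearOrder m] [CommRing R] {M : Matrix m m R} (hM : M.IsLowerTriangular)
    (hdiag : ∀ i, M i i = 1) : IsUnit M := by
  rw [Matrix.isUnit_iff_isUnit_det, Matrix.det_of_isLowerTriangular M hM]
  simp [hdiag]

end LowerTriangular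

section FirstVars

open Matrix

variable {F : Type*} [Field F] {n l : ℕ} (h : l ≤ n)

variable (F) in
noncomputable def firstVarsCombination : (Fin l → F) →ₗ[F] MvPolynomial (Fin n) F :=
  Fintype.linearCombination F fun j => X (Fin.castLE h j)

theorem firstVarsCombination_injective : Function.Injective (firstVarsCombination F h) :=
  ((linearIndependent_X (Fin n) F).comp _
    (Fin.castLE_injective h)).fintypeLinearCombination_injective

theorem aeval_firstVarsCombination {g : Matrix (Fin n) (Fin n) F}
    (hg : g.IsLowerTriangular) (c : Fin l → F) :
    aeval (fun i => ∑ j, g i j • X j) (firstVarsCombination F h c) =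
      firstVarsCombination F h (c ᵥ* g.submatrix (Fin.castLE h) (Fin.castLE h)) := by
  simp only [firstVarsCombination, Fintype.linearCombination_apply, map_sum, map_smul, aeval_X,
    hg.sum_castLE h, vecMul, dotProduct, submatrix_apply, sum_smul, smul_sum, smul_smul]
  exact sum_comm

variable [Fintype F]

theorem psi_X (i : Fin n) : psi F n l h (X i) = subspacePoly (firstVarsCombination F h) (X i) :=
  aeval_X _ i

theorem psi_sum_smul_X (a : Fin n → F) :
    psi F n l h (∑ j, a j • X j) =
      subspacePolyLinearMap (firstVarsCombination F h) (firstVarsCombination_injective h)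
        (∑ j, a j • X j) := by
  simp only [map_sum, map_smul, psi_X, subspacePolyLinearMap_apply]

end FirstVars

open Matrix in
theorem stmt_4 (F : Type*) [Field F] [Fintype F] (n l : ℕ) (h : l ≤ n)
    (g : Matrix (Fin n) (Fin n) F)
    (hlow : ∀ i j : Fin n, i < j → g i j = 0) (hdiag : ∀ i, g i i = 1) :
    (MvPolynomial.aeval (R := F) fun i => ∑ j, g i j • MvPolynomial.X j).comp (psi F n l h)
      = (psi F n l h).comp (MvPolynomial.aeval (R := F) fun i => ∑ j, g i j • MvPolynomial.X j) := by
  have hg : g.IsLowerTriangular := fun i j hij => hlow i j hij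
  have hg' : IsUnit (g.submatrix (Fin.castLE h) (Fin.castLE h)) :=
    (hg.submatrix_castLE h).isUnit_of_diag_eq_one fun i => hdiag (Fin.castLE h i)
  have hT : Function.Bijective (· ᵥ* g.submatrix (Fin.castLE h) (Fin.castLE h)) :=
    ⟨vecMul_injective_of_isUnit hg', vecMul_surjective_iff_isUnit.mpr hg'⟩
  refine algHom_ext fun i => ?_
  calc _ = subspacePoly (firstVarsCombination F h) (aeval (fun i => ∑ j, g i j • X j) (X i)) := by
        rw [AlgHom.comp_apply, psi_X]
        exact map_subspacePoly _ _ _ _ hT (aeval_firstVarsCombination h hg) _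
    _ = _ := by rw [AlgHom.comp_apply, aeval_X, psi_sum_smul_X, subspacePolyLinearMap_apply]
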